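/- For every x in B_n, if x(l) = ∂D then x(k) = 0 for all k > l. -/
import Mathlib


/-- The three-element set `M = {0, D, ∂D}`. -/
inductive Mc : Type
  | z : Mc
  | D : Mc
  | pD : Mc
deriving DecidableEq

/-- The fixed-point-free involution `∂` exchanging `D` and `∂D`
(its value on `0` is irrelevant to the operations below). -/
def pd : Mc → Mc
  | Mc.D => Mc.pD
  | Mc.pD => Mc.D
  | Mc.z => Mc.z

/-- Height-1 meet on `M`: `x ∧ y = x` if `x = y`, else `0`. -/
def mmt (x y : Mc) : Mc := if x = y then x else Mc.z

/-- `J(x,y,w) = x` if `x = y`; `x ∧ w` if `x = ∂y`; `0` otherwise. -/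
def mJ (x y w : Mc) : Mc := if x = y then x else if x = pd y then mmt x w else Mc.z

/-- `J'(x,y,w) = x ∧ w` if `x = y`; `x` if `x = ∂y`; `0` otherwise. -/
def mJ' (x y w : Mc) : Mc := if x = y then mmt x w else if x = pd y then x else Mc.z

/-- Pointwise meet on `M^n`. -/
def vmt {n : ℕ} (x y : Fin n → Mc) : Fin n → Mc := fun l => mmt (x l) (y l)

/-- Pointwise `J` on `M^n`. -/
def vJ {n : ℕ} (x y w : Fin n → Mc) : Fin n → Mc := fun l => mJ (x l) (y l) (w l)

/-- Pointwise `J'` on `M^n`. -/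
def vJ' {n : ℕ} (x y w : Fin n → Mc) : Fin n → Mc := fun l => mJ' (x l) (y l) (w l)

/-- The zero tuple in `M^n`. -/
def vz (n : ℕ) : Fin n → Mc := fun _ => Mc.z

/-- `b_i`: `D` in (1-indexed) coordinates `1..i`, `0` afterwards. -/
def vb (n i : ℕ) : Fin n → Mc := fun l => if l.val < i then Mc.D else Mc.z

/-- `d_i`: `D` in coordinates `1..i-1`, `∂D` in coordinate `i`, `0` afterwards. -/
def vd (n i : ℕ) : Fin n → Mc := fun l =>
  if l.val + 1 < i then Mc.D else if l.val + 1 = i then Mc.pD else Mc.z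

/-- `c_i`: `0` in coordinate `1`, `D` in coordinates `2..i`, `0` afterwards. -/
def vc (n i : ℕ) : Fin n → Mc := fun l =>
  if l.val = 0 then Mc.z else if l.val < i then Mc.D else Mc.z

/-- `a = b_1 = (D,0,…,0)`. -/
def va (n : ℕ) : Fin n → Mc := vb n 1

/-- The subuniverse `B_n` of `M^n`, generated by `{a} ∪ {b_i, d_i : 2 ≤ i ≤ n}`
under the pointwise operations `∧`, `J`, `J'`. -/
inductive Bn (n : ℕ) : (Fin n → Mc) → Prop
  | gen_a : Bn n (va n)
  | gen_b (i : ℕ) (h2 : 2 ≤ i) (hn : i ≤ n) : Bn n (vb n i)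
  | gen_d (i : ℕ) (h2 : 2 ≤ i) (hn : i ≤ n) : Bn n (vd n i)
  | cmt {x y} : Bn n x → Bn n y → Bn n (vmt x y)
  | cJ {x y w} : Bn n x → Bn n y → Bn n w → Bn n (vJ x y w)
  | cJ' {x y w} : Bn n x → Bn n y → Bn n w → Bn n (vJ' x y w)

/-- The congruence of the algebra with universe `C` (a subuniverse of `M^n`) generated by the
pair `(a, b)`: the smallest equivalence relation on `C` containing `(a,b)` and compatible with
the operations `∧`, `J`, `J'`. -/
inductive CgC {n : ℕ} (C : (Fin n → Mc) → Prop) (a b : Fin n → Mc) :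
    (Fin n → Mc) → (Fin n → Mc) → Prop
  | base : CgC C a b a b
  | refl {x} (hx : C x) : CgC C a b x x
  | symm {x y} : CgC C a b x y → CgC C a b y x
  | trans {x y z} : CgC C a b x y → CgC C a b y z → CgC C a b x z
  | cmt {x x' y y'} : CgC C a b x x' → CgC C a b y y' → CgC C a b (vmt x y) (vmt x' y')
  | cJ {x x' y y' w w'} : CgC C a b x x' → CgC C a b y y' → CgC C a b w w' →
      CgC C a b (vJ x y w) (vJ x' y' w')
  | cJ' {x x' y y' w w'} : CgC C a b x x' → CgC C a b y y' → CgC C a b w w' →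
      CgC C a b (vJ' x y w) (vJ' x' y' w')

/-- Unary polynomials of the algebra with universe `C`: functions built by composition from
the operations `∧`, `J`, `J'`, constants from `C`, and the identity. -/
inductive PolyC {n : ℕ} (C : (Fin n → Mc) → Prop) : ((Fin n → Mc) → (Fin n → Mc)) → Prop
  | id : PolyC C id
  | const {c} (h : C c) : PolyC C (fun _ => c)
  | pmt {f g} : PolyC C f → PolyC C g → PolyC C (fun x => vmt (f x) (g x))
  | pJ {f g h} : PolyC C f → PolyC C g → PolyC C h → PolyC C (fun x => vJ (f x) (g x) (h x))
  | pJ' {f g h} : PolyC C f → PolyC C g → PolyC C h → PolyC C (fun x => vJ' (f x) (g x) (h x))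

/-- Fundamental translations of the algebra with universe `C`: unary polynomials obtained from
one of the operations `∧`, `J`, `J'` by fixing all but one argument at constants from `C`. -/
inductive FT {n : ℕ} (C : (Fin n → Mc) → Prop) : ((Fin n → Mc) → (Fin n → Mc)) → Prop
  | mtL {c} (h : C c) : FT C (fun x => vmt x c)
  | mtR {c} (h : C c) : FT C (fun x => vmt c x)
  | J1 {c d} (hc : C c) (hd : C d) : FT C (fun x => vJ x c d)
  | J2 {c d} (hc : C c) (hd : C d) : FT C (fun x => vJ c x d)
  | J3 {c d} (hc : C c) (hd : C d) : FT C (fun x => vJ c d x)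
  | J'1 {c d} (hc : C c) (hd : C d) : FT C (fun x => vJ' x c d)
  | J'2 {c d} (hc : C c) (hd : C d) : FT C (fun x => vJ' c x d)
  | J'3 {c d} (hc : C c) (hd : C d) : FT C (fun x => vJ' c d x)

/-- The support of a tuple: the set of coordinates where it is nonzero. -/
def suppF {n : ℕ} (x : Fin n → Mc) : Finset (Fin n) :=
  Finset.univ.filter (fun l => x l ≠ Mc.z)

lemma aux_mmt_pD (a b : Mc) (h : mmt a b = Mc.pD) : a = Mc.pD ∧ b = Mc.pD := by
  cases a <;> cases b <;> simp_all [mmt]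

lemma aux_mJ_pD (a b w : Mc) (h : mJ a b w = Mc.pD) : a = Mc.pD := by
  cases a <;> cases b <;> cases w <;> simp_all [mJ, mJ', mmt, pd]

lemma aux_mJ'_pD (a b w : Mc) (h : mJ' a b w = Mc.pD) : a = Mc.pD := by
  cases a <;> cases b <;> cases w <;> simp_all [mJ, mJ', mmt, pd]

lemma aux_mJ_z (b w : Mc) : mJ Mc.z b w = Mc.z := by cases b <;> cases w <;> simp [mJ, mJ', mmt, pd]

lemma aux_mJ'_z (b w : Mc) : mJ' Mc.z b w = Mc.z := by cases b <;> cases w <;> simp [mJ, mJ', mmt, pd]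

/-- For every `x ∈ B_n`, if `x(l) = ∂D` then `x(k) = 0` for all `k > l`. -/
theorem Bn_zero_after_pD {n : ℕ} (hn : 2 ≤ n) {x : Fin n → Mc} (hx : Bn n x) :
    ∀ l k : Fin n, x l = Mc.pD → l < k → x k = Mc.z := by
  clear hn
  induction hx with
  | gen_a =>
      intro l k hl _
      simp only [va, vb] at hl
      split at hl <;> simp_all
  | gen_b i h2 hi =>
      intro l k hl _
      simp only [vb] at hl
      split at hl <;> simp_all
  | gen_d i h2 hi =>
      intro l k hl hlk
      simp only [vd] at hl ⊢
      split at hl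
      · simp_all
      · split at hl
        · rename_i h1 h2'
          have hk : ¬ (k.val + 1 < i) := by omega
          have hk2 : ¬ (k.val + 1 = i) := by omega
          simp [hk, hk2]
        · simp_all
  | cmt hx hy ihx ihy =>
      intro l k hl hlk
      have h := aux_mmt_pD _ _ hl
      simp [vmt, ihx l k h.1 hlk, ihy l k h.2 hlk, mmt]
  | cJ hx hy hw ihx ihy ihw =>
      intro l k hl hlk
      have h := aux_mJ_pD _ _ _ hl
      simp only [vJ, ihx l k h hlk]
      exact aux_mJ_z _ _
  | cJ' hx hy hw ihx ihy ihw =>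
      intro l k hl hlk
      have h := aux_mJ'_pD _ _ _ hl
      simp only [vJ', ihx l k h hlk]
      exact aux_mJ'_z _ _
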